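/- Singleton variable validity: for all application contexts C₁, C₂, every pattern φ and element variable x, the pattern ¬(C₁[x ∧ φ] ∧ C₂[x ∧ ¬φ]) is valid (evaluates to A under every structure and valuation). -/
import Mathlib


inductive Pattern (σ : Type) : Type where
  | evar : ℕ → Pattern σ
  | svar : ℕ → Pattern σ
  | const : σ → Pattern σ
  | app : Pattern σ → Pattern σ → Pattern σ
  | imp : Pattern σ → Pattern σ → Pattern σ
  | ex : ℕ → Pattern σ → Pattern σ
  | mu : ℕ → Pattern σ → Pattern σ

structure AMLStructure (σ : Type) (A : Type) : Type where
  app : A → A → Set A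
  interp : σ → Set A

def AMLStructure.sapp {σ A : Type} (S : AMLStructure σ A) (B C : Set A) : Set A :=
  ⋃ b ∈ B, ⋃ c ∈ C, S.app b c

structure Val (A : Type) : Type where
  e : ℕ → A
  s : ℕ → Set A

def Val.updE {A : Type} (v : Val A) (x : ℕ) (a : A) : Val A :=
  ⟨fun y => if y = x then a else v.e y, v.s⟩

def Val.updS {A : Type} (v : Val A) (X : ℕ) (B : Set A) : Val A :=
  ⟨v.e, fun Y => if Y = X then B else v.s Y⟩

def eval {σ A : Type} (S : AMLStructure σ A) : Pattern σ → Val A → Set A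
  | .evar n, v => {v.e n}
  | .svar n, v => v.s n
  | .const c, _ => S.interp c
  | .app φ ψ, v => S.sapp (eval S φ v) (eval S ψ v)
  | .imp φ ψ, v => (eval S φ v \ eval S ψ v)ᶜ
  | .ex x φ, v => ⋃ a : A, eval S φ (v.updE x a)
  | .mu X φ, v => ⋂₀ {B | eval S φ (v.updS X B) ⊆ B}

def fv {σ : Type} : Pattern σ → Set (ℕ ⊕ ℕ)
  | .evar n => {Sum.inl n}
  | .svar n => {Sum.inr n}
  | .const _ => ∅
  | .app φ ψ => fv φ ∪ fv ψ
  | .imp φ ψ => fv φ ∪ fv ψ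
  | .ex x φ => fv φ \ {Sum.inl x}
  | .mu X φ => fv φ \ {Sum.inr X}

def botP {σ : Type} : Pattern σ := .mu 0 (.svar 0)
def negP {σ : Type} (φ : Pattern σ) : Pattern σ := .imp φ botP
def topP {σ : Type} : Pattern σ := negP botP
def orP {σ : Type} (φ ψ : Pattern σ) : Pattern σ := .imp (negP φ) ψ
def andP {σ : Type} (φ ψ : Pattern σ) : Pattern σ := negP (orP (negP φ) (negP ψ))
def iffP {σ : Type} (φ ψ : Pattern σ) : Pattern σ := andP (.imp φ ψ) (.imp ψ φ)
def allP {σ : Type} (x : ℕ) (φ : Pattern σ) : Pattern σ := negP (.ex x (negP φ))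

def substS {σ : Type} (δ : Pattern σ) (X : ℕ) : Pattern σ → Pattern σ
  | .evar n => .evar n
  | .svar Y => if Y = X then δ else .svar Y
  | .const c => .const c
  | .app φ ψ => .app (substS δ X φ) (substS δ X ψ)
  | .imp φ ψ => .imp (substS δ X φ) (substS δ X ψ)
  | .ex x φ => .ex x (substS δ X φ)
  | .mu Z φ => if Z = X then .mu Z φ else .mu Z (substS δ X φ)

def substE {σ : Type} (δ : Pattern σ) (x : ℕ) : Pattern σ → Pattern σ
  | .evar n => if n = x then δ else .evar n
  | .svar Y => .svar Y
  | .const c => .const c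
  | .app φ ψ => .app (substE δ x φ) (substE δ x ψ)
  | .imp φ ψ => .imp (substE δ x φ) (substE δ x ψ)
  | .ex z φ => if z = x then .ex z φ else .ex z (substE δ x φ)
  | .mu Z φ => .mu Z (substE δ x φ)

def freeForS {σ : Type} (δ : Pattern σ) (X : ℕ) : Pattern σ → Prop
  | .evar _ => True
  | .svar _ => True
  | .const _ => True
  | .app φ ψ => freeForS δ X φ ∧ freeForS δ X ψ
  | .imp φ ψ => freeForS δ X φ ∧ freeForS δ X ψ
  | .ex z φ => (Sum.inr X ∈ fv φ → Sum.inl z ∉ fv δ) ∧ freeForS δ X φ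
  | .mu Z φ => Z = X ∨ ((Sum.inr X ∈ fv φ → Sum.inr Z ∉ fv δ) ∧ freeForS δ X φ)

def freeForE {σ : Type} (δ : Pattern σ) (x : ℕ) : Pattern σ → Prop
  | .evar _ => True
  | .svar _ => True
  | .const _ => True
  | .app φ ψ => freeForE δ x φ ∧ freeForE δ x ψ
  | .imp φ ψ => freeForE δ x φ ∧ freeForE δ x ψ
  | .ex z φ => z = x ∨ ((Sum.inl x ∈ fv φ → Sum.inl z ∉ fv δ) ∧ freeForE δ x φ)
  | .mu Z φ => (Sum.inl x ∈ fv φ → Sum.inr Z ∉ fv δ) ∧ freeForE δ x φ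

def subb {σ : Type} (x y : ℕ) : Pattern σ → Pattern σ
  | .evar n => .evar n
  | .svar Y => .svar Y
  | .const c => .const c
  | .app φ ψ => .app (subb x y φ) (subb x y ψ)
  | .imp φ ψ => .imp (subb x y φ) (subb x y ψ)
  | .ex z φ => if z = x then .ex y (substE (.evar y) x (subb x y φ)) else .ex z (subb x y φ)
  | .mu Z φ => .mu Z (subb x y φ)

def occursE {σ : Type} (y : ℕ) : Pattern σ → Prop
  | .evar n => n = y
  | .svar _ => False
  | .const _ => False
  | .app φ ψ => occursE y φ ∨ occursE y ψ
  | .imp φ ψ => occursE y φ ∨ occursE y ψ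
  | .ex z φ => z = y ∨ occursE y φ
  | .mu _ φ => occursE y φ

mutual
def positiveIn {σ : Type} (X : ℕ) : Pattern σ → Prop
  | .evar _ => True
  | .svar _ => True
  | .const _ => True
  | .app φ ψ => positiveIn X φ ∧ positiveIn X ψ
  | .imp φ ψ => negativeIn X φ ∧ positiveIn X ψ
  | .ex _ φ => positiveIn X φ
  | .mu Z φ => Z = X ∨ positiveIn X φ

def negativeIn {σ : Type} (X : ℕ) : Pattern σ → Prop
  | .evar _ => True
  | .svar Y => Y ≠ X
  | .const _ => True
  | .app φ ψ => negativeIn X φ ∧ negativeIn X ψ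
  | .imp φ ψ => positiveIn X φ ∧ negativeIn X ψ
  | .ex _ φ => negativeIn X φ
  | .mu Z φ => Z = X ∨ negativeIn X φ
end

def nuP {σ : Type} (X : ℕ) (φ : Pattern σ) : Pattern σ :=
  negP (.mu X (negP (substS (negP (.svar X)) X φ)))

inductive Ctx (σ : Type) : Type where
  | hole : Ctx σ
  | appL : Ctx σ → Pattern σ → Ctx σ
  | appR : Pattern σ → Ctx σ → Ctx σ

def Ctx.plug {σ : Type} : Ctx σ → Pattern σ → Pattern σ
  | .hole, δ => δ
  | .appL C ψ, δ => .app (C.plug δ) ψ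
  | .appR ψ C, δ => .app ψ (C.plug δ)

lemma eval_bot {σ A : Type} (S : AMLStructure σ A) (v : Val A) :
    eval S (botP : Pattern σ) v = ∅ := by
  simp only [botP, eval]
  ext a
  simp only [Set.mem_sInter, Set.mem_setOf_eq, Set.mem_empty_iff_false, iff_false, not_forall]
  exact ⟨∅, by simp [eval, Val.updS], by simp⟩

lemma eval_neg {σ A : Type} (S : AMLStructure σ A) (φ : Pattern σ) (v : Val A) :
    eval S (negP φ) v = (eval S φ v)ᶜ := by
  rw [show eval S (negP φ) v = (eval S φ v \ eval S botP v)ᶜ from rfl, eval_bot]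
  simp

lemma eval_and {σ A : Type} (S : AMLStructure σ A) (φ ψ : Pattern σ) (v : Val A) :
    eval S (andP φ ψ) v = eval S φ v ∩ eval S ψ v := by
  rw [andP, eval_neg, orP,
    show eval S (Pattern.imp (negP (negP φ)) (negP ψ)) v
      = (eval S (negP (negP φ)) v \ eval S (negP ψ) v)ᶜ from rfl,
    eval_neg, eval_neg, eval_neg]
  ext a; simp [Set.diff_eq]

lemma sapp_empty_left {σ A : Type} (S : AMLStructure σ A) (B : Set A) :
    S.sapp ∅ B = ∅ := by simp [AMLStructure.sapp]

lemma sapp_empty_right {σ A : Type} (S : AMLStructure σ A) (B : Set A) :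
    S.sapp B ∅ = ∅ := by simp [AMLStructure.sapp]

lemma plug_empty {σ A : Type} (S : AMLStructure σ A) (C : Ctx σ) (δ : Pattern σ)
    (v : Val A) (h : eval S δ v = ∅) : eval S (C.plug δ) v = ∅ := by
  induction C with
  | hole => exact h
  | appL C ψ ih => simp [Ctx.plug, eval, ih, sapp_empty_left]
  | appR ψ C ih => simp [Ctx.plug, eval, ih, sapp_empty_right]

theorem singleton_variable_valid {σ A : Type} [Nonempty A] (S : AMLStructure σ A)
    (C₁ C₂ : Ctx σ) (φ : Pattern σ) (x : ℕ) (v : Val A) :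
    eval S (negP (andP (C₁.plug (andP (Pattern.evar x) φ))
      (C₂.plug (andP (Pattern.evar x) (negP φ))))) v = Set.univ := by
  rw [eval_neg, eval_and]
  by_cases h : v.e x ∈ eval S φ v
  · have h2 : eval S (andP (Pattern.evar x) (negP φ)) v = ∅ := by
      rw [eval_and, eval_neg]; ext a; simp [eval]; rintro rfl; exact h
    rw [plug_empty S C₂ _ v h2]
    simp
  · have h1 : eval S (andP (Pattern.evar x) φ) v = ∅ := by
      rw [eval_and]; ext a; simp [eval]; rintro rfl; exact h
    rw [plug_empty S C₁ _ v h1]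
    simp
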